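/- For every k ≥ 2 and every n ≥ 1, the k-dimensional cube [0,1]^k (which is the stable set polytope of the edgeless graph on k vertices) is not affinely equivalent to conv(BQP_n) nor to any exposed face of conv(BQP_n): there is no injective affine map φ : ℝ^k → ℝ^{Δ_n} such that φ([0,1]^k) equals conv(BQP_n) or equals an exposed face of conv(BQP_n). -/

import Mathlib

/-- Index set `Δ_n = {(i,j) : 1 ≤ i ≤ j ≤ n}` for Boolean quadratic polytopes. -/
def Idx (n : ℕ) : Type := {p : Fin n × Fin n // p.1 ≤ p.2}

/-- The vertex set of the Boolean quadratic polytope. -/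
def BQP (n : ℕ) : Set (Idx n → ℝ) :=
  {x | (∀ p, x p = 0 ∨ x p = 1) ∧
       ∀ (i j : Fin n) (h : i < j),
         x ⟨(i, j), le_of_lt h⟩ = x ⟨(i, i), le_refl i⟩ * x ⟨(j, j), le_refl j⟩}

/-- The `k`-dimensional unit cube `[0,1]^k`. -/
def Cube (k : ℕ) : Set (Fin k → ℝ) := {x | ∀ i, 0 ≤ x i ∧ x i ≤ 1}

/-! A nondegenerate parallelogram of cube vertices, such as the indicator vectors of `{0}`, `{1}`,
`{0, 1}` and `∅`, would be mapped by `φ` to four vertices `u, v, u', v'` of `BQP n` with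
`u + v = u' + v'` and `u ∉ {u', v'}`. No such vertices exist (this is the 2-neighborliness of
`conv(BQP n)`): a vertex is determined by its diagonal, and if `u` differs from `u'` at the
diagonal entry `i` and from `v'` at `j`, then the 0/1 bookkeeping turns the `(i, j)` coordinate
of `u + v = u' + v'` into `(uᵢ - vᵢ)(uⱼ - vⱼ) = 0`, which is false. -/

theorem AffineMap.mem_extremePoints_image {𝕜 E F : Type*} [Ring 𝕜] [PartialOrder 𝕜]
    [AddRightMono 𝕜] [AddCommGroup E] [Module 𝕜 E] [AddCommGroup F] [Module 𝕜 F]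
    {f : E →ᵃ[𝕜] F} (hf : Function.Injective f) {s : Set E} {x : E}
    (hx : x ∈ s.extremePoints 𝕜) : f x ∈ (f '' s).extremePoints 𝕜 := by
  refine ⟨Set.mem_image_of_mem f hx.1, ?_⟩
  rintro _ ⟨a, ha, rfl⟩ _ ⟨b, hb, rfl⟩ hseg
  rw [← image_openSegment] at hseg
  obtain ⟨y, hy, hyx⟩ := hseg
  exact congrArg f (hx.2 ha hb (hf hyx ▸ hy))

theorem AffineMap.map_add_add_eq {𝕜 E F : Type*} [Ring 𝕜] [AddCommGroup E] [Module 𝕜 E]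
    [AddCommGroup F] [Module 𝕜 F] (f : E →ᵃ[𝕜] F) {a b c d : E} (h : a + b = c + d) :
    f a + f b = f c + f d := by
  have hvsub : b -ᵥ d = c -ᵥ a := by
    rw [vsub_eq_sub, vsub_eq_sub, sub_eq_sub_iff_add_eq_add, add_comm, h]
  have := congrArg f.linear hvsub
  rwa [f.linearMap_vsub, f.linearMap_vsub, vsub_eq_sub, vsub_eq_sub, sub_eq_sub_iff_add_eq_add,
    add_comm] at this

theorem cube_eq_pi (k : ℕ) : Cube k = Set.univ.pi fun _ => Set.Icc 0 1 := by
  ext x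
  simp only [Cube, Set.mem_ofPred_eq, Set.mem_pi, Set.mem_univ, Set.mem_Icc, forall_const]

theorem extremePoints_cube (k : ℕ) :
    (Cube k).extremePoints ℝ = {x | ∀ i, x i = 0 ∨ x i = 1} := by
  rw [cube_eq_pi, extremePoints_pi, Set.extremePoints_Icc zero_le_one]
  ext x
  simp

theorem indicator_one_mem_extremePoints_cube {k : ℕ} (s : Set (Fin k)) :
    s.indicator 1 ∈ (Cube k).extremePoints ℝ := by
  rw [extremePoints_cube]
  intro i
  by_cases hi : i ∈ s <;> simp [hi]

theorem eq_and_eq_of_add_eq_add_of_ne {R : Type*} [Ring R] [CharZero R] {a b c d : R}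
    (ha : a = 0 ∨ a = 1) (hb : b = 0 ∨ b = 1) (hc : c = 0 ∨ c = 1) (hd : d = 0 ∨ d = 1)
    (h : a + b = c + d) (hac : a ≠ c) : a = d ∧ b = c := by
  rcases ha with rfl | rfl <;> rcases hb with rfl | rfl <;> rcases hc with rfl | rfl <;>
    rcases hd with rfl | rfl <;> norm_num at *

namespace Idx

variable {n : ℕ}

def diag (i : Fin n) : Idx n := ⟨(i, i), le_rfl⟩

def pair (i j : Fin n) : Idx n := ⟨(min i j, max i j), min_le_max⟩

end Idx

namespace BQP

open Idx

variable {n : ℕ} {x y u v u' v' : Idx n → ℝ}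

theorem apply_pair (hx : x ∈ BQP n) (i j : Fin n) : x (pair i j) = x (diag i) * x (diag j) := by
  rcases lt_trichotomy i j with h | rfl | h
  · have hp : pair i j = ⟨(i, j), h.le⟩ := Subtype.ext (by simp [pair, h.le])
    rw [hp, hx.2 i j h]
    rfl
  · have hp : pair i i = diag i := Subtype.ext (by simp [pair, diag])
    rw [hp]
    rcases hx.1 (diag i) with h | h <;> rw [h] <;> norm_num
  · have hp : pair i j = ⟨(j, i), h.le⟩ := Subtype.ext (by simp [pair, h.le])
    rw [hp, hx.2 j i h, mul_comm]
    rfl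

theorem eq_of_diag (hx : x ∈ BQP n) (hy : y ∈ BQP n) (h : ∀ i, x (diag i) = y (diag i)) :
    x = y := by
  funext ⟨⟨i, j⟩, hij⟩
  have hp : (⟨(i, j), hij⟩ : Idx n) = pair i j := Subtype.ext (by simp [pair, hij])
  rw [hp, apply_pair hx, apply_pair hy, h, h]

theorem eq_or_eq_of_add_eq_add (hu : u ∈ BQP n) (hv : v ∈ BQP n) (hu' : u' ∈ BQP n)
    (hv' : v' ∈ BQP n) (h : u + v = u' + v') : u = u' ∨ u = v' := by
  by_contra! hne
  obtain ⟨i, hi⟩ : ∃ i, u (diag i) ≠ u' (diag i) := by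
    by_contra! hdiag
    exact hne.1 (eq_of_diag hu hu' hdiag)
  obtain ⟨j, hj⟩ : ∃ j, u (diag j) ≠ v' (diag j) := by
    by_contra! hdiag
    exact hne.2 (eq_of_diag hu hv' hdiag)
  have hsum (p : Idx n) : u p + v p = u' p + v' p := congrFun h p
  obtain ⟨hui, hvi⟩ := eq_and_eq_of_add_eq_add_of_ne (hu.1 _) (hv.1 _) (hu'.1 _) (hv'.1 _)
    (hsum (diag i)) hi
  obtain ⟨huj, hvj⟩ := eq_and_eq_of_add_eq_add_of_ne (hu.1 _) (hv.1 _) (hv'.1 _) (hu'.1 _)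
    ((hsum (diag j)).trans (add_comm _ _)) hj
  have hij := hsum (pair i j)
  rw [apply_pair hu, apply_pair hv, apply_pair hu', apply_pair hv', ← hui, ← hvi, ← huj,
    ← hvj] at hij
  have hprod : (u (diag i) - v (diag i)) * (u (diag j) - v (diag j)) = 0 := by
    linear_combination hij
  rcases mul_eq_zero.1 hprod with h | h
  · exact hi (hvi ▸ sub_eq_zero.1 h)
  · exact hj (hvj ▸ sub_eq_zero.1 h)

end BQP

theorem stmt2_general (k n : ℕ) (hk : 2 ≤ k) :
    ¬ ∃ φ : (Fin k → ℝ) →ᵃ[ℝ] (Idx n → ℝ),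
        Function.Injective φ ∧
        (φ '' Cube k = convexHull ℝ (BQP n) ∨
          ∃ F : Set (Idx n → ℝ),
            IsExposed ℝ (convexHull ℝ (BQP n)) F ∧ φ '' Cube k = F) := by
  rintro ⟨φ, hφ, hS⟩
  have hvert (s : Set (Fin k)) : φ (s.indicator 1) ∈ BQP n := by
    have hs := φ.mem_extremePoints_image hφ (indicator_one_mem_extremePoints_cube s)
    rcases hS with h | ⟨F, hF, h⟩ <;> rw [h] at hs
    · exact extremePoints_convexHull_subset hs
    · exact extremePoints_convexHull_subset (hF.isExtreme.extremePoints_subset_extremePoints hs)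
  let s : Set (Fin k) := {⟨0, by omega⟩}
  let t : Set (Fin k) := {⟨1, by omega⟩}
  have hst := φ.map_add_add_eq (Set.indicator_union_add_inter 1 s t).symm
  rcases BQP.eq_or_eq_of_add_eq_add (hvert s) (hvert t) (hvert _) (hvert _) hst with h | h <;>
    have := Set.indicator_one_inj ℝ (hφ h) <;> simp [s, t, Set.ext_iff] at this

/-- For `k ≥ 2` and `n ≥ 1`, the cube `[0,1]^k` is neither affinely equivalent to
`conv(BQP_n)` nor to any exposed face of `conv(BQP_n)`. -/
theorem stmt2 (k n : ℕ) (hk : 2 ≤ k) (hn : 1 ≤ n) :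
    ¬ ∃ φ : (Fin k → ℝ) →ᵃ[ℝ] (Idx n → ℝ),
        Function.Injective φ ∧
        (φ '' Cube k = convexHull ℝ (BQP n) ∨
          ∃ F : Set (Idx n → ℝ),
            IsExposed ℝ (convexHull ℝ (BQP n)) F ∧ φ '' Cube k = F) :=
  stmt2_general k n hk
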